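/- arXiv:1910.13005 — 2 statements merged into one kernel-verified Lean document; each statement's English description precedes it below -/
import Mathlib

section
/- Let G be an ample Hausdorff groupoid and suppose (Σ_1, i_1, q_1) and (Σ_2, i_2, q_2) are topologically trivial discrete twists by T ≤ R^× over G. If ψ : Σ_1 → Σ_2 is an isomorphism of twists, then the map Φ(f) = f ∘ ψ is an R-algebra isomorphism from A_R(G;Σ_2) onto A_R(G;Σ_1); if R has a T-inverse involution, then Φ is a *-isomorphism. -/
/-!
Common definitions: topological groupoids, bisections, étale/ample groupoids,
continuous `Rˣ`-valued 2-cocycles, and twisted Steinberg algebras.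

A groupoid is modelled as a type `G` together with a composability predicate
`comp`, a (partial, junk-valued off composable pairs) multiplication `mul`,
and an inversion `inv`.  The range and source maps are `r γ = γ γ⁻¹` and
`s γ = γ⁻¹ γ`, and the unit space is the set of fixed points of `r`.
-/

namespace TwistedSteinberg

structure GroupoidStruct (G : Type*) where
  comp : G → G → Prop
  mul : G → G → G
  inv : G → G

namespace GroupoidStruct

variable {G : Type*}

/-- The range map `r γ = γ γ⁻¹`. -/
def r (T : GroupoidStruct G) (γ : G) : G := T.mul γ (T.inv γ)

/-- The source map `s γ = γ⁻¹ γ`. -/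
def s (T : GroupoidStruct G) (γ : G) : G := T.mul (T.inv γ) γ

/-- The unit space `G⁰`. -/
def unitSpace (T : GroupoidStruct G) : Set G := {x | T.r x = x}

/-- The axioms making `(comp, mul, inv)` a groupoid. -/
structure IsGroupoid (T : GroupoidStruct G) : Prop where
  comp_iff : ∀ a b, T.comp a b ↔ T.s a = T.r b
  assoc : ∀ a b c, T.comp a b → T.comp b c →
    T.mul (T.mul a b) c = T.mul a (T.mul b c)
  inv_inv : ∀ a, T.inv (T.inv a) = a
  r_mul : ∀ a b, T.comp a b → T.r (T.mul a b) = T.r a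
  s_mul : ∀ a b, T.comp a b → T.s (T.mul a b) = T.s b
  r_inv : ∀ a, T.r (T.inv a) = T.s a
  s_inv : ∀ a, T.s (T.inv a) = T.r a
  r_mul_self : ∀ a, T.mul (T.r a) a = a
  mul_s_self : ∀ a, T.mul a (T.s a) = a
  r_unit : ∀ a, T.r a ∈ T.unitSpace
  s_unit : ∀ a, T.s a ∈ T.unitSpace

/-- A topological groupoid: inversion is continuous and multiplication is
continuous on the set of composable pairs. -/
structure IsTopGroupoid [TopologicalSpace G] (T : GroupoidStruct G)
    extends IsGroupoid T : Prop where
  continuous_inv : Continuous T.inv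
  continuousOn_mul : ContinuousOn (fun p : G × G => T.mul p.1 p.2)
    {p : G × G | T.comp p.1 p.2}

/-- `B` is a bisection if it is contained in an open set `U` on which both `r`
and `s` restrict to homeomorphisms onto open subsets. -/
def IsBisection [TopologicalSpace G] (T : GroupoidStruct G) (B : Set G) : Prop :=
  ∃ U : Set G, B ⊆ U ∧ IsOpen U ∧ Set.InjOn T.r U ∧ Set.InjOn T.s U ∧
    ∀ V : Set G, V ⊆ U → IsOpen V → IsOpen (T.r '' V) ∧ IsOpen (T.s '' V)

/-- A groupoid is étale if its range map is a local homeomorphism. -/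
def IsEtale [TopologicalSpace G] (T : GroupoidStruct G) : Prop :=
  IsLocalHomeomorph T.r

/-- A groupoid is ample if it has a basis of compact open bisections. -/
def IsAmple [TopologicalSpace G] (T : GroupoidStruct G) : Prop :=
  TopologicalSpace.IsTopologicalBasis
    {B : Set G | IsCompact B ∧ IsOpen B ∧ T.IsBisection B}

/-- The product `BD` of two subsets of a groupoid. -/
def setMul (T : GroupoidStruct G) (B D : Set G) : Set G :=
  {x | ∃ a ∈ B, ∃ b ∈ D, T.comp a b ∧ T.mul a b = x}

end GroupoidStruct

open GroupoidStruct

section Cocycle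

variable {G R : Type*} [TopologicalSpace G] [CommRing R] [TopologicalSpace R]

/-- A continuous normalised `Rˣ`-valued 2-cocycle on the groupoid `T`. -/
structure IsCocycle (T : GroupoidStruct G) (σ : G → G → Rˣ) : Prop where
  continuousOn : ContinuousOn (fun p : G × G => ((σ p.1 p.2 : Rˣ) : R))
    {p : G × G | T.comp p.1 p.2}
  cocycle : ∀ a b c, T.comp a b → T.comp b c →
    σ a b * σ (T.mul a b) c = σ a (T.mul b c) * σ b c
  norm_left : ∀ γ : G, σ (T.r γ) γ = 1
  norm_right : ∀ γ : G, σ γ (T.s γ) = 1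

/-- The underlying `R`-module of the (twisted) Steinberg algebra: locally
constant compactly supported functions `G → R`. -/
def steinbergCarrier (G R : Type*) [TopologicalSpace G] [Zero R] : Set (G → R) :=
  {f | IsLocallyConstant f ∧ IsCompact (Function.support f)}

/-- The twisted convolution product
`(f *σ g)(γ) = ∑_{αβ = γ} σ(α,β) f(α) g(β)`. -/
noncomputable def conv (T : GroupoidStruct G) (σ : G → G → Rˣ)
    (f g : G → R) (γ : G) : R :=
  ∑ᶠ (p : G × G) (_ : T.comp p.1 p.2 ∧ T.mul p.1 p.2 = γ),
    ((σ p.1 p.2 : Rˣ) : R) * f p.1 * g p.2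

/-- A `T`-inverse involution on `R`: a ring involution restricting to
inversion on the subgroup `Tsub ≤ Rˣ`. -/
def IsTInverseInvolution (Tsub : Subgroup Rˣ) (c : R → R) : Prop :=
  c 1 = 1 ∧ (∀ x y, c (x + y) = c x + c y) ∧ (∀ x y, c (x * y) = c x * c y) ∧
    (∀ x, c (c x) = x) ∧ ∀ z : Rˣ, z ∈ Tsub → c ((z : Rˣ) : R) = ((z⁻¹ : Rˣ) : R)

/-- The twisted involution `f*(γ) = σ(γ,γ⁻¹)⁻¹ ⬝ c (f (γ⁻¹))`. -/
noncomputable def convStar (T : GroupoidStruct G) (σ : G → G → Rˣ) (c : R → R)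
    (f : G → R) (γ : G) : R :=
  (((σ γ (T.inv γ))⁻¹ : Rˣ) : R) * c (f (T.inv γ))

end Cocycle
section Twist

/-!
Discrete twists `G⁰ × T → Σ → G` over a Hausdorff étale groupoid `G`,
where `T = Tsub` is a subgroup of the units `Rˣ` of a discrete commutative
unital ring `R`.  The inclusion is modelled as a map `i : G → Tsub → Σ`
(only its values `i x z` for `x ∈ G⁰` are relevant).
-/

variable {G S R : Type*} [TopologicalSpace G] [TopologicalSpace S]
  [CommRing R] [TopologicalSpace R]

/-- A discrete twist `(Σ, i, q)` by `Tsub ≤ Rˣ` over `G`. -/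
structure IsDiscreteTwist (TG : GroupoidStruct G) (TS : GroupoidStruct S)
    (Tsub : Subgroup Rˣ) (i : G → Tsub → S) (q : S → G) : Prop where
  topS : TS.IsTopGroupoid
  t2S : T2Space S
  locallyCompactS : LocallyCompactSpace S
  unit_eq : TS.unitSpace = (fun x => i x 1) '' TG.unitSpace
  i_continuousOn : ContinuousOn (fun p : G × Tsub => i p.1 p.2)
    (TG.unitSpace ×ˢ (Set.univ : Set Tsub))
  i_injective : ∀ x ∈ TG.unitSpace, ∀ x' ∈ TG.unitSpace, ∀ z z' : Tsub,
    i x z = i x' z' → x = x' ∧ z = z'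
  i_comp : ∀ x ∈ TG.unitSpace, ∀ z w : Tsub, TS.comp (i x z) (i x w)
  i_mul : ∀ x ∈ TG.unitSpace, ∀ z w : Tsub, TS.mul (i x z) (i x w) = i x (z * w)
  i_inv : ∀ x ∈ TG.unitSpace, ∀ z : Tsub, TS.inv (i x z) = i x z⁻¹
  q_continuous : Continuous q
  q_surjective : Function.Surjective q
  q_quotient : ∀ V : Set G, IsOpen V ↔ IsOpen (q ⁻¹' V)
  q_comp : ∀ ε δ, TS.comp ε δ → TG.comp (q ε) (q δ)
  q_mul : ∀ ε δ, TS.comp ε δ → q (TS.mul ε δ) = TG.mul (q ε) (q δ)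
  q_inv : ∀ ε, q (TS.inv ε) = TG.inv (q ε)
  q_i : ∀ x ∈ TG.unitSpace, ∀ z : Tsub, q (i x z) = x
  i_q_unit : ∀ ε ∈ TS.unitSpace, i (q ε) 1 = ε
  q_unit_mem : ∀ ε ∈ TS.unitSpace, q ε ∈ TG.unitSpace
  exact_fibre : ∀ x ∈ TG.unitSpace, ∀ ε, q ε = x ↔ ∃ z : Tsub, ε = i x z
  central_comp_left : ∀ (ε : S) (z : Tsub), TS.comp (i (TG.r (q ε)) z) ε
  central_comp_right : ∀ (ε : S) (z : Tsub), TS.comp ε (i (TG.s (q ε)) z)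
  central : ∀ (ε : S) (z : Tsub),
    TS.mul (i (TG.r (q ε)) z) ε = TS.mul ε (i (TG.s (q ε)) z)
  locally_trivial : ∀ α : G, ∃ B : Set G, α ∈ B ∧ IsOpen B ∧ TG.IsBisection B ∧
    ∃ P : G → S, ContinuousOn P B ∧ (∀ β ∈ B, q (P β) = β) ∧
      Set.BijOn (fun p : G × Tsub => TS.mul (i (TG.r p.1) p.2) (P p.1))
        (B ×ˢ (Set.univ : Set Tsub)) (q ⁻¹' B) ∧
      ContinuousOn (fun p : G × Tsub => TS.mul (i (TG.r p.1) p.2) (P p.1))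
        (B ×ˢ (Set.univ : Set Tsub)) ∧
      ∀ V ⊆ B ×ˢ (Set.univ : Set Tsub), IsOpen V →
        IsOpen ((fun p : G × Tsub => TS.mul (i (TG.r p.1) p.2) (P p.1)) '' V)

/-- The action `z ⬝ ε = i(r(ε), z) ε` of `Tsub` on the twist `Σ`. -/
def twistAct (TG : GroupoidStruct G) (TS : GroupoidStruct S)
    {Tsub : Subgroup Rˣ} (i : G → Tsub → S) (q : S → G) (z : Tsub) (ε : S) : S :=
  TS.mul (i (TG.r (q ε)) z) ε

/-- A continuous global section `P : G → Σ` of the twist. -/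
def IsGlobalSection (TG : GroupoidStruct G) (TS : GroupoidStruct S)
    (q : S → G) (P : G → S) : Prop :=
  Continuous P ∧ (∀ γ, q (P γ) = γ) ∧ ∀ x ∈ TG.unitSpace, P x ∈ TS.unitSpace

/-- The 2-cocycle `σ` is induced by the section `P`, i.e.
`P(α) P(β) P(αβ)⁻¹ = i(r(α), σ(α,β))` for composable `(α,β)`. -/
def InducesCocycle (TG : GroupoidStruct G) (TS : GroupoidStruct S)
    {Tsub : Subgroup Rˣ} (i : G → Tsub → S) (P : G → S) (σ : G → G → Tsub) : Prop :=
  ∀ α β, TG.comp α β →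
    TS.mul (TS.mul (P α) (P β)) (TS.inv (P (TG.mul α β))) = i (TG.r α) (σ α β)

/-- A continuous normalised 2-cocycle with values in the subgroup `Tsub ≤ Rˣ`. -/
structure IsCocycleSub (TG : GroupoidStruct G) (Tsub : Subgroup Rˣ)
    (σ : G → G → Tsub) : Prop where
  continuousOn : ContinuousOn (fun p : G × G => (((σ p.1 p.2 : Rˣ)) : R))
    {p : G × G | TG.comp p.1 p.2}
  cocycle : ∀ a b c, TG.comp a b → TG.comp b c →
    σ a b * σ (TG.mul a b) c = σ a (TG.mul b c) * σ b c
  norm_left : ∀ γ : G, σ (TG.r γ) γ = 1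
  norm_right : ∀ γ : G, σ γ (TG.s γ) = 1

/-- `σ` and `τ` are cohomologous via the continuous function `b : G → Tsub`. -/
def CohomologousVia (TG : GroupoidStruct G) {Tsub : Subgroup Rˣ}
    (σ τ : G → G → Tsub) (b : G → Tsub) : Prop :=
  Continuous (fun γ : G => ((b γ : Rˣ) : R)) ∧ (∀ x ∈ TG.unitSpace, b x = 1) ∧
    ∀ α β, TG.comp α β → σ α β * (τ α β)⁻¹ = b α * b β * (b (TG.mul α β))⁻¹

/-- The twisted groupoid `G ×_σ T`. -/
def prodTwist (TG : GroupoidStruct G) (Tsub : Subgroup Rˣ) (σ : G → G → Tsub) :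
    GroupoidStruct (G × Tsub) where
  comp p p' := TG.comp p.1 p'.1
  mul p p' := (TG.mul p.1 p'.1, σ p.1 p'.1 * p.2 * p'.2)
  inv p := (TG.inv p.1, (σ p.1 (TG.inv p.1))⁻¹ * p.2⁻¹)

/-- The inclusion `i_σ : G⁰ × T → G ×_σ T`. -/
def prodTwistI (Tsub : Subgroup Rˣ) : G → Tsub → G × Tsub := fun x z => (x, z)

/-- The projection `q_σ : G ×_σ T → G`. -/
def prodTwistQ (Tsub : Subgroup Rˣ) : G × Tsub → G := fun p => p.1

/-- An isomorphism of discrete twists: a homeomorphism and groupoid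
isomorphism intertwining the inclusions and projections. -/
def IsTwistIso {S1 S2 : Type*} [TopologicalSpace S1] [TopologicalSpace S2]
    (TG : GroupoidStruct G) (T1 : GroupoidStruct S1) (T2 : GroupoidStruct S2)
    {Tsub : Subgroup Rˣ} (i1 : G → Tsub → S1) (q1 : S1 → G)
    (i2 : G → Tsub → S2) (q2 : S2 → G) (ψ : S1 → S2) : Prop :=
  Function.Bijective ψ ∧ Continuous ψ ∧ (∀ V : Set S1, IsOpen V → IsOpen (ψ '' V)) ∧
    (∀ δ ε, T1.comp δ ε → T2.comp (ψ δ) (ψ ε) ∧ ψ (T1.mul δ ε) = T2.mul (ψ δ) (ψ ε)) ∧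
    (∀ x ∈ TG.unitSpace, ∀ z : Tsub, ψ (i1 x z) = i2 x z) ∧
    ∀ ε, q2 (ψ ε) = q1 ε

/-- The carrier of the twisted Steinberg algebra `A_R(G; Σ)`: continuous
`Tsub`-equivariant functions `f : Σ → R` such that `q(supp f)` has compact
closure. -/
def twistCarrier (TG : GroupoidStruct G) (TS : GroupoidStruct S)
    {Tsub : Subgroup Rˣ} (i : G → Tsub → S) (q : S → G) : Set (S → R) :=
  {f | Continuous f ∧
    (∀ (z : Tsub) (ε : S), f (TS.mul (i (TG.r (q ε)) z) ε) = ((z : Rˣ) : R) * f ε) ∧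
    IsCompact (closure (q '' Function.support f))}

/-- The convolution `(f *_Σ g)(ε) = ∑_{γ ∈ G^{s(q(ε))}} f(ε P(γ)) g(P(γ)⁻¹)`. -/
noncomputable def twistConv (TG : GroupoidStruct G) (TS : GroupoidStruct S)
    (q : S → G) (P : G → S) (f g : S → R) (ε : S) : R :=
  ∑ᶠ (γ : G) (_ : TG.r γ = TG.s (q ε)), f (TS.mul ε (P γ)) * g (TS.inv (P γ))

/-- The involution `f*(ε) = c (f (ε⁻¹))` on `A_R(G; Σ)`. -/
def twistStar (TS : GroupoidStruct S) (c : R → R) (f : S → R) (ε : S) : R :=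
  c (f (TS.inv ε))

end Twist

section Helpers

namespace GroupoidStruct

variable {G : Type*} {T : GroupoidStruct G}

lemma IsGroupoid.comp_self_inv (h : T.IsGroupoid) (a : G) : T.comp a (T.inv a) :=
  (h.comp_iff _ _).2 (h.r_inv a).symm

lemma IsGroupoid.comp_inv_self (h : T.IsGroupoid) (a : G) : T.comp (T.inv a) a :=
  (h.comp_iff _ _).2 (h.s_inv a)

/-- Uniqueness of inverses in a groupoid. -/
lemma IsGroupoid.eq_inv (h : T.IsGroupoid) {a b : G}
    (hab : T.comp a b) (hba : T.comp b a)
    (h1 : T.mul a b = T.r a) (h2 : T.mul b a = T.s a) : T.inv a = b := by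
  have sb : T.s b = T.r a := (h.comp_iff b a).1 hba
  calc T.inv a = T.mul (T.inv a) (T.s (T.inv a)) := (h.mul_s_self _).symm
    _ = T.mul (T.inv a) (T.mul a b) := by rw [h.s_inv, ← h1]
    _ = T.mul (T.mul (T.inv a) a) b := (h.assoc _ _ _ (h.comp_inv_self a) hab).symm
    _ = T.mul (T.s a) b := rfl
    _ = T.mul (T.mul b a) b := by rw [h2]
    _ = T.mul b (T.mul a b) := h.assoc _ _ _ hba hab
    _ = T.mul b (T.s b) := by rw [h1, sb]
    _ = b := h.mul_s_self b

/-- `(ab)⁻¹ = b⁻¹ a⁻¹` in a groupoid. -/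
lemma IsGroupoid.inv_mul_rev (h : T.IsGroupoid) {a b : G} (hab : T.comp a b) :
    T.inv (T.mul a b) = T.mul (T.inv b) (T.inv a) := by
  have hsr : T.s a = T.r b := (h.comp_iff a b).1 hab
  have c1 : T.comp (T.inv b) (T.inv a) := by
    refine (h.comp_iff _ _).2 ?_
    rw [h.s_inv, h.r_inv, hsr]
  have cabbi : T.comp (T.mul a b) (T.inv b) := by
    refine (h.comp_iff _ _).2 ?_
    rw [h.s_mul a b hab, h.r_inv]
  have caiab : T.comp (T.inv a) (T.mul a b) := by
    refine (h.comp_iff _ _).2 ?_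
    rw [h.s_inv, h.r_mul a b hab]
  refine h.eq_inv ?_ ?_ ?_ ?_
  · refine (h.comp_iff _ _).2 ?_
    rw [h.s_mul a b hab, h.r_mul _ _ c1, h.r_inv]
  · refine (h.comp_iff _ _).2 ?_
    rw [h.s_mul _ _ c1, h.s_inv, h.r_mul a b hab]
  · -- (ab)(b⁻¹a⁻¹) = r (ab)
    rw [← h.assoc _ _ _ cabbi c1, h.assoc a b (T.inv b) hab (h.comp_self_inv b)]
    have : T.mul b (T.inv b) = T.s a := by rw [hsr]; rfl
    rw [this, h.mul_s_self a, h.r_mul a b hab]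
    rfl
  · -- (b⁻¹a⁻¹)(ab) = s (ab)
    rw [h.assoc _ _ _ c1 caiab, ← h.assoc _ _ _ (h.comp_inv_self a) hab]
    have : T.mul (T.inv a) a = T.r b := by rw [← hsr]; rfl
    rw [this, h.r_mul_self b, h.s_mul a b hab]
    rfl

end GroupoidStruct

open GroupoidStruct

variable {G S R : Type*} [TopologicalSpace G] [TopologicalSpace S]
  [CommRing R] [TopologicalSpace R]
  {TG : GroupoidStruct G} {TS : GroupoidStruct S} {Tsub : Subgroup Rˣ}
  {i : G → Tsub → S} {q : S → G}

/-- Two units of the twist with the same image under `q` coincide. -/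
lemma unit_eq_of_q (hTw : IsDiscreteTwist TG TS Tsub i q)
    {ε ε' : S} (hε : ε ∈ TS.unitSpace) (hε' : ε' ∈ TS.unitSpace)
    (hqq : q ε = q ε') : ε = ε' := by
  rw [← hTw.i_q_unit ε hε, ← hTw.i_q_unit ε' hε', hqq]

lemma q_r (hTw : IsDiscreteTwist TG TS Tsub i q) (ε : S) :
    q (TS.r ε) = TG.r (q ε) := by
  have h := hTw.q_mul ε (TS.inv ε) (hTw.topS.toIsGroupoid.comp_self_inv ε)
  rw [hTw.q_inv] at h
  exact h

lemma q_s (hTw : IsDiscreteTwist TG TS Tsub i q) (ε : S) :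
    q (TS.s ε) = TG.s (q ε) := by
  have h := hTw.q_mul (TS.inv ε) ε (hTw.topS.toIsGroupoid.comp_inv_self ε)
  rw [hTw.q_inv] at h
  exact h

/-- Two elements of the twist with the same image under `q` differ by the
central `T`-action. -/
lemma fibre_shift (hTw : IsDiscreteTwist TG TS Tsub i q) (hG : TG.IsGroupoid)
    {δ δ' : S} (hqq : q δ = q δ') :
    ∃ z : Tsub, δ = TS.mul (i (TG.r (q δ')) z) δ' := by
  have gp := hTw.topS.toIsGroupoid
  have hs : TS.s δ = TS.s δ' :=
    unit_eq_of_q hTw (gp.s_unit δ) (gp.s_unit δ')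
      (by rw [q_s hTw, q_s hTw, hqq])
  have hcomp : TS.comp δ (TS.inv δ') := by
    refine (gp.comp_iff _ _).2 ?_
    rw [gp.r_inv, ← hs]
  have hqη : q (TS.mul δ (TS.inv δ')) = TG.r (q δ') := by
    rw [hTw.q_mul _ _ hcomp, hTw.q_inv, hqq]
    rfl
  obtain ⟨z, hz⟩ := (hTw.exact_fibre _ (hG.r_unit (q δ')) _).1 hqη
  refine ⟨z, ?_⟩
  rw [← hz, gp.assoc _ _ _ hcomp (gp.comp_inv_self δ')]
  rw [show TS.mul (TS.inv δ') δ' = TS.s δ' from rfl, ← hs, gp.mul_s_self]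

end Helpers

/-- If `ψ : Σ₁ → Σ₂` is an isomorphism of topologically
trivial discrete twists by `Tsub ≤ Rˣ` over an ample Hausdorff groupoid `G`,
then `Φ(f) = f ∘ ψ` is an `R`-algebra isomorphism from `A_R(G; Σ₂)` onto
`A_R(G; Σ₁)`; if `R` has a `T`-inverse involution, `Φ` is a
`*`-isomorphism. -/
theorem twistSteinbergAlgebras_of_isomorphic_twists
    {G S1 S2 R : Type*} [TopologicalSpace G] [TopologicalSpace S1]
    [TopologicalSpace S2] [T2Space G] [LocallyCompactSpace G]
    [CommRing R] [TopologicalSpace R] [DiscreteTopology R]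
    (TG : GroupoidStruct G) (hTG : TG.IsTopGroupoid) (hample : TG.IsAmple)
    (T1 : GroupoidStruct S1) (T2 : GroupoidStruct S2) (Tsub : Subgroup Rˣ)
    (i1 : G → Tsub → S1) (q1 : S1 → G) (i2 : G → Tsub → S2) (q2 : S2 → G)
    (hTw1 : IsDiscreteTwist TG T1 Tsub i1 q1)
    (hTw2 : IsDiscreteTwist TG T2 Tsub i2 q2)
    (P1 : G → S1) (hP1 : IsGlobalSection TG T1 q1 P1)
    (P2 : G → S2) (hP2 : IsGlobalSection TG T2 q2 P2)
    (ψ : S1 → S2) (hψ : IsTwistIso TG T1 T2 i1 q1 i2 q2 ψ) :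
    -- `Φ` maps `A_R(G; Σ₂)` into `A_R(G; Σ₁)`
    (∀ f, f ∈ twistCarrier (R := R) TG T2 i2 q2 →
        f ∘ ψ ∈ twistCarrier (R := R) TG T1 i1 q1)
    -- `Φ` is a bijection of `A_R(G; Σ₂)` onto `A_R(G; Σ₁)`
    ∧ Set.BijOn (fun f : S2 → R => f ∘ ψ)
        (twistCarrier (R := R) TG T2 i2 q2) (twistCarrier (R := R) TG T1 i1 q1)
    -- `Φ` is `R`-linear
    ∧ (∀ f g : S2 → R, (f + g) ∘ ψ = f ∘ ψ + g ∘ ψ)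
    ∧ (∀ (a : R) (f : S2 → R), (a • f) ∘ ψ = a • (f ∘ ψ))
    -- `Φ` intertwines the convolutions
    ∧ (∀ f g, f ∈ twistCarrier (R := R) TG T2 i2 q2 →
        g ∈ twistCarrier (R := R) TG T2 i2 q2 →
        (twistConv TG T2 q2 P2 f g) ∘ ψ
          = twistConv TG T1 q1 P1 (f ∘ ψ) (g ∘ ψ))
    -- if `R` has a `T`-inverse involution, `Φ` is a `*`-isomorphism
    ∧ (∀ c : R → R, IsTInverseInvolution Tsub c →
        ∀ f : S2 → R, (twistStar T2 c f) ∘ ψ = twistStar T1 c (f ∘ ψ)) := by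
  obtain ⟨hbij, hcont, hopen, hmul, hi, hq⟩ := hψ
  have gpG := hTG.toIsGroupoid
  have gp1 := hTw1.topS.toIsGroupoid
  have gp2 := hTw2.topS.toIsGroupoid
  -- `ψ` sends units to units
  have psi_unit : ∀ ε ∈ T1.unitSpace, ψ ε ∈ T2.unitSpace := by
    intro ε hε
    have hx : q1 ε ∈ TG.unitSpace := hTw1.q_unit_mem ε hε
    have h1 : ψ ε = i2 (q1 ε) 1 := by
      rw [← hTw1.i_q_unit ε hε, hi _ hx 1, hTw1.q_i _ hx]
    rw [h1, hTw2.unit_eq]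
    exact ⟨q1 ε, hx, rfl⟩
  -- `ψ` commutes with the range and source maps
  have psi_r : ∀ δ : S1, ψ (T1.r δ) = T2.r (ψ δ) := by
    intro δ
    refine unit_eq_of_q hTw2 (psi_unit _ (gp1.r_unit δ)) (gp2.r_unit (ψ δ)) ?_
    rw [hq, q_r hTw1, q_r hTw2, hq]
  have psi_s : ∀ δ : S1, ψ (T1.s δ) = T2.s (ψ δ) := by
    intro δ
    refine unit_eq_of_q hTw2 (psi_unit _ (gp1.s_unit δ)) (gp2.s_unit (ψ δ)) ?_
    rw [hq, q_s hTw1, q_s hTw2, hq]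
  -- `ψ` commutes with inversion
  have psi_inv : ∀ δ : S1, ψ (T1.inv δ) = T2.inv (ψ δ) := by
    intro δ
    have c1 := gp1.comp_self_inv δ
    have c2 := gp1.comp_inv_self δ
    refine (gp2.eq_inv (hmul _ _ c1).1 (hmul _ _ c2).1 ?_ ?_).symm
    · exact ((hmul _ _ c1).2).symm.trans (psi_r δ)
    · exact ((hmul _ _ c2).2).symm.trans (psi_s δ)
  -- membership
  have hmem : ∀ f, f ∈ twistCarrier (R := R) TG T2 i2 q2 →
      f ∘ ψ ∈ twistCarrier (R := R) TG T1 i1 q1 := by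
    intro f hf
    obtain ⟨hfc, hfe, hfs⟩ := hf
    refine ⟨hfc.comp hcont, ?_, ?_⟩
    · intro z ε
      have hx : TG.r (q1 ε) ∈ TG.unitSpace := gpG.r_unit _
      have c := hTw1.central_comp_left ε z
      simp only [Function.comp_apply]
      rw [(hmul _ _ c).2, hi _ hx z, ← hq ε]
      exact hfe z (ψ ε)
    · have himg : q1 '' Function.support (f ∘ ψ) = q2 '' Function.support f := by
        rw [Function.support_comp_eq_preimage]
        calc q1 '' (ψ ⁻¹' Function.support f)
            = (fun ε => q2 (ψ ε)) '' (ψ ⁻¹' Function.support f) :=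
              Set.image_congr fun x _ => (hq x).symm
          _ = q2 '' (ψ '' (ψ ⁻¹' Function.support f)) := (Set.image_image _ _ _).symm
          _ = q2 '' Function.support f := by rw [Set.image_preimage_eq _ hbij.2]
      rw [himg]
      exact hfs
  refine ⟨hmem, ⟨fun f hf => hmem f hf, ?_, ?_⟩, fun f g => rfl, fun a f => rfl, ?_, ?_⟩
  · -- injectivity
    intro f _ g _ h
    funext x
    obtain ⟨y, rfl⟩ := hbij.2 x
    exact congrFun h y
  · -- surjectivity
    intro g hg
    obtain ⟨hgc, hge, hgs⟩ := hg
    set φ := Equiv.ofBijective ψ hbij with hφ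
    have hφψ : ∀ x, φ.symm (ψ x) = x := fun x => φ.symm_apply_apply x
    have hψφ : ∀ x, ψ (φ.symm x) = x := fun x => φ.apply_symm_apply x
    have hsymm_cont : Continuous (φ.symm : S2 → S1) := by
      rw [continuous_def]
      intro U hU
      have hpre : (φ.symm : S2 → S1) ⁻¹' U = ψ '' U := by
        ext x
        constructor
        · intro hx
          exact ⟨φ.symm x, hx, hψφ x⟩
        · rintro ⟨y, hy, rfl⟩
          show φ.symm (ψ y) ∈ U
          rw [hφψ y]
          exact hy
      rw [hpre]
      exact hopen U hU
    refine ⟨g ∘ (φ.symm : S2 → S1), ⟨hgc.comp hsymm_cont, ?_, ?_⟩, ?_⟩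
    · intro z ε
      have hψδ : ψ (φ.symm ε) = ε := hψφ ε
      have hq1δ : q1 (φ.symm ε) = q2 ε := by
        rw [← hq (φ.symm ε), hψδ]
      have key : ψ (T1.mul (i1 (TG.r (q1 (φ.symm ε))) z) (φ.symm ε))
          = T2.mul (i2 (TG.r (q2 ε)) z) ε := by
        have c := hTw1.central_comp_left (φ.symm ε) z
        rw [(hmul _ _ c).2, hi _ (gpG.r_unit _) z, hq1δ, hψδ]
      have key' : φ.symm (T2.mul (i2 (TG.r (q2 ε)) z) ε)
          = T1.mul (i1 (TG.r (q1 (φ.symm ε))) z) (φ.symm ε) := by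
        rw [← key, hφψ]
      simp only [Function.comp_apply]
      rw [key']
      exact hge z (φ.symm ε)
    · have h1 : Function.support (g ∘ (φ.symm : S2 → S1)) = ψ '' Function.support g := by
        ext x
        simp only [Function.mem_support, Function.comp_apply, Set.mem_image]
        constructor
        · intro hx
          exact ⟨φ.symm x, hx, hψφ x⟩
        · rintro ⟨y, hy, rfl⟩
          rw [hφψ y]
          exact hy
      have h2 : q2 '' (ψ '' Function.support g) = q1 '' Function.support g := by
        rw [Set.image_image]
        exact Set.image_congr fun x _ => hq x
      rw [h1, h2]
      exact hgs
    · funext x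
      show g (φ.symm (ψ x)) = g x
      rw [hφψ x]
  · -- convolution
    intro f g hf hg
    funext ε
    simp only [Function.comp_apply, twistConv]
    rw [hq ε]
    refine finsum_congr fun γ => finsum_congr fun h => ?_
    -- h : TG.r γ = TG.s (q1 ε)
    have hqP1 : q1 (P1 γ) = γ := hP1.2.1 γ
    have hqP2 : q2 (P2 γ) = γ := hP2.2.1 γ
    have hqψP1 : q2 (ψ (P1 γ)) = q2 (P2 γ) := by rw [hq, hqP1, hqP2]
    obtain ⟨z, hz⟩ := fibre_shift hTw2 gpG hqψP1
    have hsε : T1.s ε = T1.r (P1 γ) := by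
      refine unit_eq_of_q hTw1 (gp1.s_unit ε) (gp1.r_unit (P1 γ)) ?_
      rw [q_s hTw1, q_r hTw1, hqP1, ← h]
    have cε : T1.comp ε (P1 γ) := (gp1.comp_iff _ _).2 hsε
    have hsψ : T2.s (ψ ε) = T2.r (P2 γ) := by
      refine unit_eq_of_q hTw2 (gp2.s_unit _) (gp2.r_unit _) ?_
      rw [q_s hTw2, q_r hTw2, hq, hqP2, ← h]
    have c2 : T2.comp (ψ ε) (P2 γ) := (gp2.comp_iff _ _).2 hsψ
    have hfpart : f (ψ (T1.mul ε (P1 γ)))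
        = ((z : Rˣ) : R) * f (T2.mul (ψ ε) (P2 γ)) := by
      rw [(hmul _ _ cε).2, hz, hTw2.central (P2 γ) z,
        ← gp2.assoc _ _ _ c2 (hTw2.central_comp_right (P2 γ) z)]
      have hcompG : TG.comp (q1 ε) γ := (gpG.comp_iff _ _).2 h.symm
      have hsγ : TG.s (q2 (P2 γ)) = TG.s (q2 (T2.mul (ψ ε) (P2 γ))) := by
        rw [hTw2.q_mul _ _ c2, hq, hqP2, gpG.s_mul _ _ hcompG]
      rw [hsγ, ← hTw2.central (T2.mul (ψ ε) (P2 γ)) z]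
      exact hf.2.1 z _
    have hgpart : g (ψ (T1.inv (P1 γ)))
        = (((z⁻¹ : Tsub) : Rˣ) : R) * g (T2.inv (P2 γ)) := by
      rw [psi_inv, hz, gp2.inv_mul_rev (hTw2.central_comp_left (P2 γ) z),
        hTw2.i_inv _ (gpG.r_unit _) z]
      have hx' : TG.r (q2 (P2 γ)) = TG.s (q2 (T2.inv (P2 γ))) := by
        rw [hTw2.q_inv, gpG.s_inv]
      rw [hx', ← hTw2.central (T2.inv (P2 γ)) z⁻¹]
      exact hg.2.1 z⁻¹ _
    rw [hfpart, hgpart]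
    have hzz : ((z : Rˣ) : R) * (((z⁻¹ : Tsub) : Rˣ) : R) = 1 := by
      rw [InvMemClass.coe_inv, ← Units.val_mul, mul_inv_cancel, Units.val_one]
    rw [mul_mul_mul_comm, hzz, one_mul]
  · -- involution
    intro c hc f
    funext ε
    simp only [Function.comp_apply, twistStar]
    rw [psi_inv ε]
end TwistedSteinberg
end

section
/- Let G be an ample Hausdorff groupoid, let Σ be a topologically trivial discrete twist by T ≤ R^× over G, let P : G → Σ be a continuous global section, and let σ : G^(2) → T be the continuous 2-cocycle induced by P. Then the map Ψ(f) = f ∘ P is an R-algebra isomorphism from A_R(G;Σ) onto A_R(G,σ^{-1}), where σ^{-1} is the 2-cocycle (α,β) ↦ σ(α,β)^{-1}. If R has a T-inverse involution, then Ψ is a *-isomorphism. -/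
/-!
Common definitions: topological groupoids, bisections, étale/ample groupoids,
continuous `Rˣ`-valued 2-cocycles, and twisted Steinberg algebras.

A groupoid is modelled as a type `G` together with a composability predicate
`comp`, a (partial, junk-valued off composable pairs) multiplication `mul`,
and an inversion `inv`.  The range and source maps are `r γ = γ γ⁻¹` and
`s γ = γ⁻¹ γ`, and the unit space is the set of fixed points of `r`.
-/

namespace TwistedSteinberg

open GroupoidStruct

/-!
Every `ε ∈ Σ` is uniquely `z ⬝ P(q ε)` with `z ∈ T`, and the coordinate `z` is locally constant
because `Σ` is locally trivial. Hence an equivariant `f` is determined by `f ∘ P`, and a locally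
constant compactly supported `h` on `G` extends to `ε ↦ z(ε) h(q ε)`, so `Ψ` is bijective.
Compatibility with the products and involutions comes from `P(α) P(β) = σ(α,β) ⬝ P(αβ)` and
`P(γ)⁻¹ = σ(γ,γ⁻¹)⁻¹ ⬝ P(γ⁻¹)`, together with the cocycle identity
`σ(αβ,β⁻¹)⁻¹ = σ(α,β) σ(β,β⁻¹)⁻¹`.
-/

open Topology

namespace GroupoidStruct.IsGroupoid

variable {G : Type*} {T : GroupoidStruct G}

theorem comp_self_inv_s18 (K : T.IsGroupoid) (a : G) : T.comp a (T.inv a) :=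
  (K.comp_iff _ _).2 (K.r_inv a).symm

theorem comp_inv_self_s18 (K : T.IsGroupoid) (a : G) : T.comp (T.inv a) a :=
  (K.comp_iff _ _).2 (K.s_inv a)

theorem mul_mul_inv (K : T.IsGroupoid) {a b : G} (h : T.comp a b) :
    T.mul (T.mul a b) (T.inv b) = a := by
  rw [K.assoc a b (T.inv b) h (K.comp_self_inv_s18 b)]
  change T.mul a (T.r b) = a
  rw [← (K.comp_iff a b).1 h, K.mul_s_self]

theorem mul_right_cancel (K : T.IsGroupoid) {a a' b : G} (ha : T.comp a b)
    (ha' : T.comp a' b) (h : T.mul a b = T.mul a' b) : a = a' := by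
  rw [← K.mul_mul_inv ha, h, K.mul_mul_inv ha']

theorem bijOn_factorizations (K : T.IsGroupoid) (a : G) :
    Set.BijOn (fun b => (T.mul a b, T.inv b)) {b | T.r b = T.s a}
      {p : G × G | T.comp p.1 p.2 ∧ T.mul p.1 p.2 = a} := by
  refine ⟨fun b hb => ?_, fun b _ b' _ h => ?_, fun p ⟨hp, hpa⟩ => ?_⟩
  · have hab : T.comp a b := (K.comp_iff a b).2 (Eq.symm hb)
    exact ⟨(K.comp_iff _ _).2 (by rw [K.s_mul _ _ hab, K.r_inv]), K.mul_mul_inv hab⟩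
  · have h' : T.inv b = T.inv b' := congrArg Prod.snd h
    rw [← K.inv_inv b, h', K.inv_inv]
  · refine ⟨T.inv p.2, ?_, Prod.ext ?_ (K.inv_inv p.2)⟩
    · change T.r (T.inv p.2) = T.s a
      rw [K.r_inv, ← hpa, K.s_mul _ _ hp]
    · rw [← hpa]
      exact K.mul_mul_inv hp

end GroupoidStruct.IsGroupoid

section TwistedConvolution

variable {G S R : Type*} [TopologicalSpace G] [TopologicalSpace S] [CommRing R]
  [TopologicalSpace R] {TG : GroupoidStruct G} {TS : GroupoidStruct S}
  {Tsub : Subgroup Rˣ} {i : G → Tsub → S} {q : S → G}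

local notation "act" => twistAct TG TS i q

theorem IsCocycleSub.inv_mul_inv {σ : G → G → Tsub} (hσ : IsCocycleSub (R := R) TG Tsub σ)
    (KG : TG.IsGroupoid) {a b : G} (h : TG.comp a b) :
    (σ (TG.mul a b) (TG.inv b))⁻¹ = σ a b * (σ b (TG.inv b))⁻¹ := by
  have hco := hσ.cocycle a b (TG.inv b) h (KG.comp_self_inv_s18 b)
  have hnorm : σ a (TG.mul b (TG.inv b)) = 1 := by
    change σ a (TG.r b) = 1
    rw [← (KG.comp_iff a b).1 h]
    exact hσ.norm_right a
  rw [hnorm, one_mul] at hco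
  rw [← hco, mul_inv, mul_inv_cancel_left]

theorem apply_twistAct {f : S → R} (hf : f ∈ twistCarrier TG TS i q) (z : Tsub) (ε : S) :
    f (act z ε) = ((z : Rˣ) : R) * f ε :=
  hf.2.1 z ε

theorem comp_mem_steinbergCarrier [DiscreteTopology R] {P : G → S} (hPc : Continuous P)
    (hqP : ∀ γ, q (P γ) = γ) {f : S → R} (hf : f ∈ twistCarrier TG TS i q) :
    f ∘ P ∈ steinbergCarrier G R := by
  have hloc : IsLocallyConstant (f ∘ P) :=
    (IsLocallyConstant.iff_continuous _).2 (hf.1.comp hPc)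
  refine ⟨hloc, hf.2.2.of_isClosed_subset ?_ fun γ hγ => subset_closure ⟨P γ, hγ, hqP γ⟩⟩
  exact (hloc.isClopen_fiber 0).isOpen.isClosed_compl

noncomputable def fibreCoord (TG : GroupoidStruct G) (TS : GroupoidStruct S)
    (i : G → Tsub → S) (q : S → G) (Q : G → S) (ε : S) : Tsub :=
  Classical.epsilon fun z => ε = twistAct TG TS i q z (Q (q ε))

noncomputable def sectionExtend (TG : GroupoidStruct G) (TS : GroupoidStruct S)
    (i : G → Tsub → S) (q : S → G) (P : G → S) (h : G → R) (ε : S) : R :=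
  ((fibreCoord TG TS i q P ε : Rˣ) : R) * h (q ε)

namespace IsDiscreteTwist

variable (hTw : IsDiscreteTwist TG TS Tsub i q)
include hTw

theorem q_s (ε : S) : q (TS.s ε) = TG.s (q ε) := by
  change q (TS.mul (TS.inv ε) ε) = TG.mul (TG.inv (q ε)) (q ε)
  rw [hTw.q_mul _ _ (hTw.topS.comp_inv_self_s18 ε), hTw.q_inv]

theorem q_r (ε : S) : q (TS.r ε) = TG.r (q ε) := by
  change q (TS.mul ε (TS.inv ε)) = TG.mul (q ε) (TG.inv (q ε))
  rw [hTw.q_mul _ _ (hTw.topS.comp_self_inv_s18 ε), hTw.q_inv]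

theorem s_eq_i (ε : S) : TS.s ε = i (TG.s (q ε)) 1 := by
  rw [← hTw.q_s, hTw.i_q_unit _ (hTw.topS.s_unit ε)]

theorem r_eq_i (ε : S) : TS.r ε = i (TG.r (q ε)) 1 := by
  rw [← hTw.q_r, hTw.i_q_unit _ (hTw.topS.r_unit ε)]

theorem twistAct_one (ε : S) : act 1 ε = ε := by
  change TS.mul (i (TG.r (q ε)) 1) ε = ε
  rw [← hTw.r_eq_i]
  exact hTw.topS.r_mul_self ε

theorem section_eq_i {P : G → S} (hP : IsGlobalSection TG TS q P) {x : G}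
    (hx : x ∈ TG.unitSpace) : P x = i x 1 := by
  have h := hTw.i_q_unit _ (hP.2.2 x hx)
  rw [hP.2.1] at h
  exact h.symm

variable (KG : TG.IsGroupoid)
include KG

theorem q_twistAct (z : Tsub) (ε : S) : q (act z ε) = q ε := by
  change q (TS.mul (i (TG.r (q ε)) z) ε) = q ε
  rw [hTw.q_mul _ _ (hTw.central_comp_left ε z), hTw.q_i _ (KG.r_unit _), KG.r_mul_self]

theorem twistAct_twistAct (w z : Tsub) (ε : S) : act w (act z ε) = act (w * z) ε := by
  change TS.mul (i (TG.r (q (act z ε))) w) (TS.mul (i (TG.r (q ε)) z) ε)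
    = TS.mul (i (TG.r (q ε)) (w * z)) ε
  rw [hTw.q_twistAct KG, ← hTw.topS.assoc _ _ _ (hTw.i_comp _ (KG.r_unit _) w z)
    (hTw.central_comp_left ε z), hTw.i_mul _ (KG.r_unit _)]

theorem twistAct_left_injective (ε : S) : Function.Injective fun z => act z ε := by
  intro z w h
  have := hTw.topS.mul_right_cancel (hTw.central_comp_left ε z) (hTw.central_comp_left ε w) h
  exact (hTw.i_injective _ (KG.r_unit _) _ (KG.r_unit _) z w this).2

theorem exists_twistAct_eq {ε ε' : S} (h : q ε = q ε') : ∃ z, ε = act z ε' := by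
  have KS := hTw.topS.toIsGroupoid
  have hcomp : TS.comp ε (TS.inv ε') :=
    (KS.comp_iff _ _).2 (by rw [KS.r_inv, hTw.s_eq_i, hTw.s_eq_i, h])
  have hq : q (TS.mul ε (TS.inv ε')) = TG.r (q ε') := by
    rw [hTw.q_mul _ _ hcomp, hTw.q_inv, h]
    rfl
  obtain ⟨z, hz⟩ := (hTw.exact_fibre _ (KG.r_unit _) _).1 hq
  refine ⟨z, ?_⟩
  change ε = TS.mul (i (TG.r (q ε')) z) ε'
  rw [← hz, KS.assoc _ _ _ hcomp (KS.comp_inv_self_s18 ε')]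
  change ε = TS.mul ε (TS.s ε')
  rw [hTw.s_eq_i ε', ← h, ← hTw.s_eq_i, KS.mul_s_self]

theorem comp_section {P : G → S} (hqP : ∀ γ, q (P γ) = γ) {α β : G} (h : TG.comp α β) :
    TS.comp (P α) (P β) :=
  (hTw.topS.comp_iff _ _).2 (by rw [hTw.s_eq_i, hTw.r_eq_i, hqP, hqP, (KG.comp_iff α β).1 h])

theorem section_mul_section {P : G → S} (hqP : ∀ γ, q (P γ) = γ) {σ : G → G → Tsub}
    (hind : InducesCocycle TG TS i P σ) {α β : G} (h : TG.comp α β) :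
    TS.mul (P α) (P β) = act (σ α β) (P (TG.mul α β)) := by
  have KS := hTw.topS.toIsGroupoid
  have hs : TS.s (TS.mul (P α) (P β)) = TS.s (P (TG.mul α β)) := by
    rw [KS.s_mul _ _ (hTw.comp_section KG hqP h), hTw.s_eq_i, hTw.s_eq_i, hqP, hqP,
      KG.s_mul _ _ h]
  have hcomp : TS.comp (TS.mul (P α) (P β)) (TS.inv (P (TG.mul α β))) :=
    (KS.comp_iff _ _).2 (by rw [KS.r_inv, hs])
  change _ = TS.mul (i (TG.r (q (P (TG.mul α β)))) (σ α β)) (P (TG.mul α β))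
  rw [hqP, KG.r_mul _ _ h, ← hind α β h, KS.assoc _ _ _ hcomp (KS.comp_inv_self_s18 _)]
  change _ = TS.mul _ (TS.s _)
  rw [← hs, KS.mul_s_self]

theorem inv_section {P : G → S} (hP : IsGlobalSection TG TS q P) {σ : G → G → Tsub}
    (hind : InducesCocycle TG TS i P σ) (γ : G) :
    TS.inv (P γ) = act (σ γ (TG.inv γ))⁻¹ (P (TG.inv γ)) := by
  have KS := hTw.topS.toIsGroupoid
  have hcomp := hTw.comp_section KG hP.2.1 (KG.comp_self_inv_s18 γ)
  have hr := hTw.r_eq_i (P (TG.inv γ))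
  rw [hP.2.1, KG.r_inv] at hr
  have key : P (TG.inv γ) = act (σ γ (TG.inv γ)) (TS.inv (P γ)) :=
    calc P (TG.inv γ) = TS.mul (TS.inv (P γ)) (TS.mul (P γ) (P (TG.inv γ))) := by
          rw [← KS.assoc _ _ _ (KS.comp_inv_self_s18 _) hcomp]
          change _ = TS.mul (TS.s (P γ)) _
          rw [hTw.s_eq_i, hP.2.1, ← hr, KS.r_mul_self]
      _ = TS.mul (TS.inv (P γ)) (i (TG.r γ) (σ γ (TG.inv γ))) := by
          rw [hTw.section_mul_section KG hP.2.1 hind (KG.comp_self_inv_s18 γ)]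
          change TS.mul _ (TS.mul (i (TG.r (q (P (TG.r γ)))) _) (P (TG.r γ))) = _
          rw [hP.2.1, hTw.section_eq_i hP (KG.r_unit γ), KG.r_unit γ,
            hTw.i_mul _ (KG.r_unit γ), mul_one]
      _ = act (σ γ (TG.inv γ)) (TS.inv (P γ)) := by
          rw [twistAct, hTw.central, hTw.q_inv, hP.2.1, KG.s_inv]
  rw [key, hTw.twistAct_twistAct KG, inv_mul_cancel, hTw.twistAct_one]

theorem fibreCoord_spec {Q : G → S} {ε : S} (hQ : q (Q (q ε)) = q ε) :
    ε = act (fibreCoord TG TS i q Q ε) (Q (q ε)) :=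
  Classical.epsilon_spec (hTw.exists_twistAct_eq KG hQ.symm)

theorem fibreCoord_eq_of_eq {Q : G → S} {ε : S} {z : Tsub} (hQ : q (Q (q ε)) = q ε)
    (h : ε = act z (Q (q ε))) : fibreCoord TG TS i q Q ε = z :=
  hTw.twistAct_left_injective KG _ ((hTw.fibreCoord_spec KG hQ).symm.trans h)

theorem fibreCoord_twistAct {Q : G → S} {ε : S} (hQ : q (Q (q ε)) = q ε) (z : Tsub) :
    fibreCoord TG TS i q Q (act z ε) = z * fibreCoord TG TS i q Q ε := by
  refine hTw.fibreCoord_eq_of_eq KG (by rw [hTw.q_twistAct KG, hQ]) ?_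
  rw [hTw.q_twistAct KG, ← hTw.twistAct_twistAct KG, ← hTw.fibreCoord_spec KG hQ]

theorem fibreCoord_self {Q : G → S} {γ : G} (hQ : q (Q γ) = γ) :
    fibreCoord TG TS i q Q (Q γ) = 1 :=
  hTw.fibreCoord_eq_of_eq KG (by rw [hQ, hQ]) (by rw [hQ, hTw.twistAct_one])

theorem fibreCoord_change {P Q : G → S} {ε : S} (hP : q (P (q ε)) = q ε)
    (hQ : q (Q (q ε)) = q ε) :
    fibreCoord TG TS i q P ε
      = fibreCoord TG TS i q Q ε * (fibreCoord TG TS i q Q (P (q ε)))⁻¹ := by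
  set d := fibreCoord TG TS i q Q (P (q ε))
  have hd : P (q ε) = act d (Q (q ε)) := by
    have h := hTw.fibreCoord_spec KG (Q := Q) (ε := P (q ε)) (by rw [hP, hQ])
    rwa [hP] at h
  refine hTw.fibreCoord_eq_of_eq KG hP ?_
  rw [hd, hTw.twistAct_twistAct KG, inv_mul_cancel_right]
  exact hTw.fibreCoord_spec KG hQ

/-- On a local trivialisation `(γ, w) ↦ w ⬝ Q(γ)` over an open `B`, the coordinate relative to
`Q` is constant on the open slices `B × {w}`. -/
theorem eventually_fibreCoord_eq [DiscreteTopology R] {B : Set G} {Q : G → S} (hB : IsOpen B)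
    (hQ : ∀ β ∈ B, q (Q β) = β)
    (hopen : ∀ V ⊆ B ×ˢ (Set.univ : Set Tsub), IsOpen V →
      IsOpen ((fun p : G × Tsub => TS.mul (i (TG.r p.1) p.2) (Q p.1)) '' V))
    {ε₀ : S} (hε₀ : q ε₀ ∈ B) :
    ∀ᶠ ε in 𝓝 ε₀, fibreCoord TG TS i q Q ε = fibreCoord TG TS i q Q ε₀ := by
  set w := fibreCoord TG TS i q Q ε₀
  have hslice := hopen (B ×ˢ {w}) (Set.prod_mono_right (Set.subset_univ _))
    (hB.prod (isOpen_discrete _))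
  have hmem :
      ε₀ ∈ (fun p : G × Tsub => TS.mul (i (TG.r p.1) p.2) (Q p.1)) '' (B ×ˢ {w}) := by
    refine ⟨(q ε₀, w), ⟨hε₀, rfl⟩, ?_⟩
    have h := hTw.fibreCoord_spec KG (hQ _ hε₀)
    rw [twistAct, hQ _ hε₀] at h
    exact h.symm
  filter_upwards [hslice.mem_nhds hmem]
  rintro _ ⟨⟨β, z⟩, ⟨hβ, hz⟩, rfl⟩
  obtain rfl : z = w := hz
  have h : TS.mul (i (TG.r β) w) (Q β) = act w (Q β) := by rw [twistAct, hQ β hβ]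
  change fibreCoord TG TS i q Q (TS.mul (i (TG.r β) w) (Q β)) = w
  rw [h, hTw.fibreCoord_twistAct KG (by rw [hQ β hβ, hQ β hβ]),
    hTw.fibreCoord_self KG (hQ β hβ), mul_one]

theorem isLocallyConstant_fibreCoord [DiscreteTopology R] {P : G → S} (hPc : Continuous P)
    (hqP : ∀ γ, q (P γ) = γ) : IsLocallyConstant (fibreCoord TG TS i q P) := by
  refine (IsLocallyConstant.iff_eventually_eq _).2 fun ε₀ => ?_
  obtain ⟨B, hγ₀, hB, -, Q, -, hQ, -, -, hopen⟩ := hTw.locally_trivial (q ε₀)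
  have hnear : ∀ᶠ ε in 𝓝 ε₀, q ε ∈ B :=
    hTw.q_continuous.continuousAt.preimage_mem_nhds (hB.mem_nhds hγ₀)
  have hcoord := hTw.eventually_fibreCoord_eq KG hB hQ hopen hγ₀
  have hcoordP : ∀ᶠ ε in 𝓝 ε₀,
      fibreCoord TG TS i q Q (P (q ε)) = fibreCoord TG TS i q Q (P (q ε₀)) :=
    ((hPc.comp hTw.q_continuous).tendsto ε₀).eventually
      (hTw.eventually_fibreCoord_eq KG hB hQ hopen (ε₀ := P (q ε₀)) (by rwa [hqP]))
  filter_upwards [hnear, hcoord, hcoordP] with ε hε hε' hε''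
  rw [hTw.fibreCoord_change KG (hqP _) (hQ _ hε), hTw.fibreCoord_change KG (hqP _) (hQ _ hγ₀),
    hε', hε'']

theorem apply_eq_fibreCoord_mul {P : G → S} (hqP : ∀ γ, q (P γ) = γ) {f : S → R}
    (hf : f ∈ twistCarrier TG TS i q) (ε : S) :
    f ε = ((fibreCoord TG TS i q P ε : Rˣ) : R) * f (P (q ε)) := by
  conv_lhs => rw [hTw.fibreCoord_spec KG (ε := ε) (hqP _)]
  exact apply_twistAct hf _ _

theorem apply_inv_section {P : G → S} (hP : IsGlobalSection TG TS q P) {σ : G → G → Tsub}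
    (hind : InducesCocycle TG TS i P σ) {f : S → R} (hf : f ∈ twistCarrier TG TS i q)
    (γ : G) :
    f (TS.inv (P γ)) = ((((σ γ (TG.inv γ))⁻¹ : Tsub) : Rˣ) : R) * f (P (TG.inv γ)) := by
  rw [hTw.inv_section KG hP hind, apply_twistAct hf]

theorem injOn_comp_section {P : G → S} (hqP : ∀ γ, q (P γ) = γ) :
    Set.InjOn (fun f : S → R => f ∘ P) (twistCarrier TG TS i q) := by
  intro f hf g hg hfg
  funext ε
  rw [hTw.apply_eq_fibreCoord_mul KG hqP hf, hTw.apply_eq_fibreCoord_mul KG hqP hg]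
  exact congrArg _ (congrFun hfg (q ε))

theorem sectionExtend_mem_twistCarrier [DiscreteTopology R] {P : G → S} (hPc : Continuous P)
    (hqP : ∀ γ, q (P γ) = γ) {h : G → R} (hh : h ∈ steinbergCarrier G R) :
    sectionExtend TG TS i q P h ∈ twistCarrier TG TS i q := by
  have hsupp : q '' Function.support (sectionExtend TG TS i q P h) ⊆ Function.support h := by
    rintro _ ⟨ε, hε, rfl⟩ h0
    exact hε (by rw [sectionExtend, h0, mul_zero])
  refine ⟨?_, fun z ε => ?_, ?_⟩
  · exact (((hTw.isLocallyConstant_fibreCoord KG hPc hqP).comp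
      fun z : Tsub => ((z : Rˣ) : R)).mul (hh.1.comp_continuous hTw.q_continuous)).continuous
  · change sectionExtend TG TS i q P h (act z ε) = _
    rw [sectionExtend, sectionExtend, hTw.fibreCoord_twistAct KG (hqP _), hTw.q_twistAct KG]
    push_cast
    ring
  · exact hh.2.of_isClosed_subset isClosed_closure
      (closure_minimal hsupp (hh.1.isClopen_fiber 0).isOpen.isClosed_compl)

theorem sectionExtend_comp {P : G → S} (hqP : ∀ γ, q (P γ) = γ) (h : G → R) :
    sectionExtend TG TS i q P h ∘ P = h := by
  funext γ
  rw [Function.comp_apply, sectionExtend, hTw.fibreCoord_self KG (hqP γ), hqP]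
  simp

theorem surjOn_comp_section [DiscreteTopology R] {P : G → S} (hPc : Continuous P)
    (hqP : ∀ γ, q (P γ) = γ) :
    Set.SurjOn (fun f : S → R => f ∘ P) (twistCarrier TG TS i q) (steinbergCarrier G R) :=
  fun h hh => ⟨_, hTw.sectionExtend_mem_twistCarrier KG hPc hqP hh, hTw.sectionExtend_comp KG hqP h⟩

theorem twistConv_comp_section {P : G → S} (hP : IsGlobalSection TG TS q P)
    {σ : G → G → Tsub} (hσ : IsCocycleSub (R := R) TG Tsub σ)
    (hind : InducesCocycle TG TS i P σ) {f g : S → R} (hf : f ∈ twistCarrier TG TS i q)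
    (hg : g ∈ twistCarrier TG TS i q) :
    twistConv TG TS q P f g ∘ P
      = conv TG (fun a b => (((σ a b)⁻¹ : Tsub) : Rˣ)) (f ∘ P) (g ∘ P) := by
  funext γ₀
  change ∑ᶠ γ ∈ {γ | TG.r γ = TG.s (q (P γ₀))}, f (TS.mul (P γ₀) (P γ)) * g (TS.inv (P γ))
    = ∑ᶠ p ∈ {p : G × G | TG.comp p.1 p.2 ∧ TG.mul p.1 p.2 = γ₀},
      ((((σ p.1 p.2)⁻¹ : Tsub) : Rˣ) : R) * f (P p.1) * g (P p.2)
  rw [hP.2.1]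
  refine finsum_mem_eq_of_bijOn _ (KG.bijOn_factorizations γ₀) fun γ hγ => ?_
  have hc : TG.comp γ₀ γ := (KG.comp_iff _ _).2 (Eq.symm hγ)
  rw [hTw.section_mul_section KG hP.2.1 hind hc, apply_twistAct hf,
    hTw.apply_inv_section KG hP hind hg, hσ.inv_mul_inv KG hc]
  push_cast
  ring

theorem twistStar_comp_section {P : G → S} (hP : IsGlobalSection TG TS q P)
    {σ : G → G → Tsub} (hind : InducesCocycle TG TS i P σ) {c : R → R}
    (hc : IsTInverseInvolution Tsub c) {f : S → R} (hf : f ∈ twistCarrier TG TS i q) :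
    twistStar TS c f ∘ P = convStar TG (fun a b => (((σ a b)⁻¹ : Tsub) : Rˣ)) c (f ∘ P) := by
  funext γ
  change c (f (TS.inv (P γ)))
    = (((((σ γ (TG.inv γ))⁻¹ : Tsub) : Rˣ)⁻¹ : Rˣ) : R) * c (f (P (TG.inv γ)))
  rw [hTw.apply_inv_section KG hP hind hf, hc.2.2.1, hc.2.2.2.2 _ (σ γ (TG.inv γ))⁻¹.2]

end IsDiscreteTwist

end TwistedConvolution

theorem twistSteinbergAlgebra_iso_cocycleSteinbergAlgebra_general
    {G S R : Type*} [TopologicalSpace G] [TopologicalSpace S]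
    [CommRing R] [TopologicalSpace R] [DiscreteTopology R]
    (TG : GroupoidStruct G) (hTG : TG.IsTopGroupoid)
    (TS : GroupoidStruct S) (Tsub : Subgroup Rˣ)
    (i : G → Tsub → S) (q : S → G)
    (hTw : IsDiscreteTwist TG TS Tsub i q)
    (P : G → S) (hP : IsGlobalSection TG TS q P)
    (σ : G → G → Tsub) (hσ : IsCocycleSub (R := R) TG Tsub σ)
    (hind : InducesCocycle TG TS i P σ) :
    -- `Ψ` maps `A_R(G; Σ)` into `A_R(G, σ⁻¹)`
    (∀ f, f ∈ twistCarrier (R := R) TG TS i q → f ∘ P ∈ steinbergCarrier G R)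
    -- `Ψ` is a bijection of `A_R(G; Σ)` onto `A_R(G, σ⁻¹)`
    ∧ Set.BijOn (fun f : S → R => f ∘ P)
        (twistCarrier (R := R) TG TS i q) (steinbergCarrier G R)
    -- `Ψ` is `R`-linear
    ∧ (∀ f g : S → R, (f + g) ∘ P = f ∘ P + g ∘ P)
    ∧ (∀ (a : R) (f : S → R), (a • f) ∘ P = a • (f ∘ P))
    -- `Ψ` intertwines the convolution on `A_R(G; Σ)` with the `σ⁻¹`-twisted
    -- convolution on `A_R(G, σ⁻¹)`
    ∧ (∀ f g, f ∈ twistCarrier (R := R) TG TS i q →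
        g ∈ twistCarrier (R := R) TG TS i q →
        (twistConv TG TS q P f g) ∘ P
          = conv TG (fun a b => (((σ a b)⁻¹ : Tsub) : Rˣ)) (f ∘ P) (g ∘ P))
    -- if `R` has a `T`-inverse involution, `Ψ` is a `*`-isomorphism
    ∧ (∀ c : R → R, IsTInverseInvolution Tsub c →
        ∀ f, f ∈ twistCarrier (R := R) TG TS i q →
          (twistStar TS c f) ∘ P
            = convStar TG (fun a b => (((σ a b)⁻¹ : Tsub) : Rˣ)) c (f ∘ P)) := by
  have KG := hTG.toIsGroupoid
  have hmaps := fun f (hf : f ∈ twistCarrier (R := R) TG TS i q) =>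
    comp_mem_steinbergCarrier hP.1 hP.2.1 hf
  exact ⟨hmaps,
    ⟨hmaps, hTw.injOn_comp_section KG hP.2.1, hTw.surjOn_comp_section KG hP.1 hP.2.1⟩,
    fun _ _ => rfl, fun _ _ => rfl,
    fun _ _ hf hg => hTw.twistConv_comp_section KG hP hσ hind hf hg,
    fun _ hc _ hf => hTw.twistStar_comp_section KG hP hind hc hf⟩

/-- Let `(Σ, i, q)` be a topologically trivial discrete
twist by `Tsub ≤ Rˣ` over an ample Hausdorff groupoid `G`, let `P` be a
continuous global section, and let `σ` be the continuous 2-cocycle induced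
by `P`.  Then `Ψ(f) = f ∘ P` is an `R`-algebra isomorphism from `A_R(G; Σ)`
onto `A_R(G, σ⁻¹)`, where `σ⁻¹ : (α,β) ↦ σ(α,β)⁻¹`; if `R` has a
`T`-inverse involution, then `Ψ` is a `*`-isomorphism. -/
theorem twistSteinbergAlgebra_iso_cocycleSteinbergAlgebra
    {G S R : Type*} [TopologicalSpace G] [TopologicalSpace S]
    [T2Space G] [LocallyCompactSpace G]
    [CommRing R] [TopologicalSpace R] [DiscreteTopology R]
    (TG : GroupoidStruct G) (hTG : TG.IsTopGroupoid) (hample : TG.IsAmple)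
    (TS : GroupoidStruct S) (Tsub : Subgroup Rˣ)
    (i : G → Tsub → S) (q : S → G)
    (hTw : IsDiscreteTwist TG TS Tsub i q)
    (P : G → S) (hP : IsGlobalSection TG TS q P)
    (σ : G → G → Tsub) (hσ : IsCocycleSub (R := R) TG Tsub σ)
    (hind : InducesCocycle TG TS i P σ) :
    -- `Ψ` maps `A_R(G; Σ)` into `A_R(G, σ⁻¹)`
    (∀ f, f ∈ twistCarrier (R := R) TG TS i q → f ∘ P ∈ steinbergCarrier G R)
    -- `Ψ` is a bijection of `A_R(G; Σ)` onto `A_R(G, σ⁻¹)`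
    ∧ Set.BijOn (fun f : S → R => f ∘ P)
        (twistCarrier (R := R) TG TS i q) (steinbergCarrier G R)
    -- `Ψ` is `R`-linear
    ∧ (∀ f g : S → R, (f + g) ∘ P = f ∘ P + g ∘ P)
    ∧ (∀ (a : R) (f : S → R), (a • f) ∘ P = a • (f ∘ P))
    -- `Ψ` intertwines the convolution on `A_R(G; Σ)` with the `σ⁻¹`-twisted
    -- convolution on `A_R(G, σ⁻¹)`
    ∧ (∀ f g, f ∈ twistCarrier (R := R) TG TS i q →
        g ∈ twistCarrier (R := R) TG TS i q →
        (twistConv TG TS q P f g) ∘ P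
          = conv TG (fun a b => (((σ a b)⁻¹ : Tsub) : Rˣ)) (f ∘ P) (g ∘ P))
    -- if `R` has a `T`-inverse involution, `Ψ` is a `*`-isomorphism
    ∧ (∀ c : R → R, IsTInverseInvolution Tsub c →
        ∀ f, f ∈ twistCarrier (R := R) TG TS i q →
          (twistStar TS c f) ∘ P
            = convStar TG (fun a b => (((σ a b)⁻¹ : Tsub) : Rˣ)) c (f ∘ P)) :=
  twistSteinbergAlgebra_iso_cocycleSteinbergAlgebra_general TG hTG TS Tsub i q hTw P hP σ hσ hind

end TwistedSteinberg
end
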